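/- Transferring weight from a lighter product to a heavier product cannot decrease the expected maximum load: for every T ∈ ℕ, every vector of positive weights (w_1,…,w_k) with w_1 ≥ w_2, and every δ ∈ [0, w_2], one has E_T((w_1 + δ, w_2 − δ, w_3,…,w_k)) ≥ E_T((w_1,…,w_k)). -/

import Mathlib

open Finset

/-- MNL choice probability for a single customer offered products with weights `w`:
outcome `some i` (select product `i`) has probability `w i / (1 + ∑ j, w j)`, and
outcome `none` (no purchase) has probability `1 / (1 + ∑ j, w j)`. -/
noncomputable def mnlProb {k : ℕ} (w : Fin k → ℝ) : Option (Fin k) → ℝ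
  | none => 1 / (1 + ∑ j, w j)
  | some i => w i / (1 + ∑ j, w j)

/-- The load of product `i`: the number of customers `t` selecting product `i`,
given the outcome `f` of the `T` customers' choices. -/
def loadCount {k T : ℕ} (f : Fin T → Option (Fin k)) (i : Fin k) : ℕ :=
  (Finset.univ.filter fun t => f t = some i).card

/-- `ET T k w` is the expected maximum load when products with weights `w 0, …, w (k-1)`
are statically offered to `T` customers making independent MNL choices; the loads form
a multinomial random vector. -/
noncomputable def ET (T k : ℕ) (w : Fin k → ℝ) : ℝ :=
  ∑ f : Fin T → Option (Fin k),
    (∏ t, mnlProb w (f t)) * ((Finset.univ.sup (loadCount f) : ℕ) : ℝ)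

/-!
Let `i` be the heavier and `j` the lighter product, and merge `i` into `j`. Given the merged
outcome `g`, the `m` customers of the merged product split between `i` and `j` in independent
trials with weights `q i` and `q j`, and the maximum load is `max M (max l (m - l))` when `l` of
them choose `i`. Hence the expected maximum load is a nonnegative combination of binomial sums
`∑ C(m,l) xˡ y^(m-l) φ l` with `x = q i`, `y = q j`, and `φ` symmetric about `m / 2` and
nondecreasing away from it. Along `x + y = s` the derivative in `x` is
`m ∑ C(m-1,l) xˡ y^(m-1-l) (φ (l+1) - φ l)`; pairing `l` with `m-1-l` makes it a sum of products
`(φ (l+1) - φ l) (xˡ y^(m-1-l) - x^(m-1-l) yˡ)` whose two factors have the same sign once `x ≥ y`.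
So moving mass from `j` to `i` does not decrease any of the binomial sums.
-/

open scoped fwdDiff

lemma pow_mul_pow_le_pow_mul_pow {x y : ℝ} (hy : 0 ≤ y) (hyx : y ≤ x) {a b : ℕ} (hab : a ≤ b) :
    x ^ a * y ^ b ≤ x ^ b * y ^ a := by
  obtain ⟨d, rfl⟩ := Nat.exists_eq_add_of_le hab
  calc x ^ a * y ^ (a + d) = (x * y) ^ a * y ^ d := by ring
    _ ≤ (x * y) ^ a * x ^ d := mul_le_mul_of_nonneg_left (pow_le_pow_left₀ hy hyx d)
      (pow_nonneg (mul_nonneg (hy.trans hyx) hy) a)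
    _ = x ^ (a + d) * y ^ a := by ring

/-- For `x + y = 1` this is the expectation of `φ X` for `X ∼ Bin(m, x)`. -/
noncomputable def binomialSum (m : ℕ) (φ : ℕ → ℝ) (x y : ℝ) : ℝ :=
  ∑ l ∈ range (m + 1), (m.choose l : ℝ) * x ^ l * y ^ (m - l) * φ l

section binomialSum

lemma hasDerivAt_binomialSum (n : ℕ) (φ : ℕ → ℝ) (s x : ℝ) :
    HasDerivAt (fun x => binomialSum (n + 1) φ x (s - x))
      ((n + 1) * binomialSum n (Δ_[1] φ) x (s - x)) x := by
  have hterm : ∀ l ∈ range (n + 1 + 1),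
      HasDerivAt (fun x => ((n + 1).choose l : ℝ) * x ^ l * (s - x) ^ (n + 1 - l) * φ l)
        (((n + 1).choose l : ℝ) * (l * x ^ (l - 1) * (s - x) ^ (n + 1 - l)
          - x ^ l * ((n + 1 - l : ℕ) * (s - x) ^ (n - l))) * φ l) x := by
    intro l _
    have h := (((hasDerivAt_pow l x).fun_mul (((hasDerivAt_id' x).const_sub s).fun_pow
      (n + 1 - l))).const_mul ((n + 1).choose l : ℝ)).mul_const (φ l)
    simp only [← mul_assoc, Nat.sub_sub, Nat.add_sub_add_right] at h
    exact h.congr_deriv (by ring)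
  refine (HasDerivAt.fun_sum hterm).congr_deriv ?_
  simp only [binomialSum, fwdDiff, mul_sub, sub_mul, sum_sub_distrib, mul_sum]
  rw [sum_range_succ', sum_range_succ _ (n + 1)]
  simp only [Nat.sub_self, CharP.cast_eq_zero, zero_mul, mul_zero, add_zero]
  congr 1 <;> refine sum_congr rfl fun l _ => ?_
  · have h := congrArg (Nat.cast : ℕ → ℝ) (Nat.add_one_mul_choose_eq n l)
    push_cast at h
    simp only [Nat.cast_add, Nat.cast_one, Nat.add_sub_add_right, Nat.add_sub_cancel]
    linear_combination (x ^ l * (s - x) ^ (n - l) * φ (l + 1)) * h.symm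
  · have h := congrArg (Nat.cast : ℕ → ℝ) (Nat.choose_mul_succ_eq n l)
    push_cast at h
    linear_combination (x ^ l * (s - x) ^ (n - l) * φ l) * h.symm

variable {φ : ℕ → ℝ}

lemma binomialSum_fwdDiff_nonneg {n : ℕ} (hsymm : ∀ l ≤ n + 1, φ (n + 1 - l) = φ l)
    (hmono : ∀ l, n + 1 ≤ 2 * l → l < n + 1 → φ l ≤ φ (l + 1)) {x y : ℝ} (hy : 0 ≤ y)
    (hyx : y ≤ x) : 0 ≤ binomialSum n (Δ_[1] φ) x y := by
  have hreflect : binomialSum n (Δ_[1] φ) x y =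
      ∑ l ∈ range (n + 1), (n.choose l : ℝ) * x ^ (n - l) * y ^ l * (φ l - φ (l + 1)) := by
    rw [binomialSum, ← sum_range_reflect]
    refine sum_congr rfl fun l hl => ?_
    have hl : l ≤ n := Nat.lt_succ_iff.mp (mem_range.mp hl)
    rw [Nat.add_sub_cancel, Nat.choose_symm hl, Nat.sub_sub_self hl, fwdDiff, ← hsymm l (by omega),
      ← hsymm (l + 1) (by omega), show n - l + 1 = n + 1 - l by omega,
      show n + 1 - (l + 1) = n - l by omega]
  have hterm : ∀ l ≤ n,
      0 ≤ (φ (l + 1) - φ l) * (x ^ l * y ^ (n - l) - x ^ (n - l) * y ^ l) := by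
    intro l hl
    rcases lt_trichotomy (2 * l) n with hlt | heq | hgt
    · refine mul_nonneg_of_nonpos_of_nonpos ?_ ?_
      · have := hmono (n - l) (by omega) (by omega)
        rw [← hsymm l (by omega), ← hsymm (l + 1) (by omega),
          show n + 1 - (l + 1) = n - l by omega, show n + 1 - l = n - l + 1 by omega]
        linarith
      · linarith [pow_mul_pow_le_pow_mul_pow hy hyx (show l ≤ n - l by omega)]
    · rw [show n - l = l by omega, sub_self, mul_zero]
    · refine mul_nonneg (sub_nonneg.mpr (hmono l (by omega) (by omega))) ?_
      linarith [pow_mul_pow_le_pow_mul_pow hy hyx (show n - l ≤ l by omega)]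
  have htwice : 2 * binomialSum n (Δ_[1] φ) x y = ∑ l ∈ range (n + 1),
      (n.choose l : ℝ) * ((φ (l + 1) - φ l) * (x ^ l * y ^ (n - l) - x ^ (n - l) * y ^ l)) := by
    rw [two_mul]
    nth_rewrite 2 [hreflect]
    rw [binomialSum, ← sum_add_distrib]
    exact sum_congr rfl fun l _ => by rw [fwdDiff]; ring
  have : 0 ≤ 2 * binomialSum n (Δ_[1] φ) x y := htwice ▸ sum_nonneg
    fun l hl => mul_nonneg (Nat.cast_nonneg _) (hterm l (Nat.lt_succ_iff.mp (mem_range.mp hl)))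
  linarith

lemma binomialSum_le_binomialSum_add_sub {m : ℕ} (hsymm : ∀ l ≤ m, φ (m - l) = φ l)
    (hmono : ∀ l, m ≤ 2 * l → l < m → φ l ≤ φ (l + 1)) {x y d : ℝ} (hyx : y ≤ x) (hd : 0 ≤ d)
    (hdy : d ≤ y) : binomialSum m φ x y ≤ binomialSum m φ (x + d) (y - d) := by
  cases m with
  | zero => simp [binomialSum]
  | succ n =>
    set s := x + y
    have hmon : MonotoneOn (fun z => binomialSum (n + 1) φ z (s - z)) (Set.Icc (s / 2) s) := by
      refine monotoneOn_of_hasDerivWithinAt_nonneg (convex_Icc _ _)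
        (fun z _ => (hasDerivAt_binomialSum n φ s z).continuousAt.continuousWithinAt)
        (fun z _ => (hasDerivAt_binomialSum n φ s z).hasDerivWithinAt) fun z hz => ?_
      rw [interior_Icc] at hz
      exact mul_nonneg (by positivity)
        (binomialSum_fwdDiff_nonneg hsymm hmono (by linarith [hz.2]) (by linarith [hz.1]))
    have := hmon (show x ∈ Set.Icc (s / 2) s from ⟨by linarith, by linarith⟩)
      (show x + d ∈ Set.Icc (s / 2) s from ⟨by linarith, by linarith⟩) (le_add_of_nonneg_right hd)
    dsimp only at this
    rwa [show s - x = y by ring, show s - (x + d) = y - d by ring] at this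

end binomialSum

section choices

variable {n T : ℕ} {i j : Fin n}

noncomputable def expectedMaxLoad (T : ℕ) (q : Option (Fin n) → ℝ) : ℝ :=
  ∑ f : Fin T → Option (Fin n), (∏ t, q (f t)) * ((univ.sup (loadCount f) : ℕ) : ℝ)

def mergeChoice (i j : Fin n) (c : Option (Fin n)) : Option (Fin n) :=
  if c = some i then some j else c

lemma mergeChoice_ne_some (hij : i ≠ j) (c : Option (Fin n)) : mergeChoice i j c ≠ some i := by
  unfold mergeChoice; split_ifs with h <;> simp_all [eq_comm]

lemma sum_mergeChoice_fiber_eq_sum_powerset {g : Fin T → Option (Fin n)} (hg : ∀ t, g t ≠ some i)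
    (F : (Fin T → Option (Fin n)) → ℝ) :
    ∑ f with mergeChoice i j ∘ f = g, F f =
      ∑ B ∈ (univ.filter fun t => g t = some j).powerset, F (B.piecewise (fun _ => some i) g) := by
  symm
  refine sum_nbij' (fun B => B.piecewise (fun _ => some i) g)
    (fun f => univ.filter fun t => f t = some i) ?_ ?_ ?_ ?_ (fun _ _ => rfl)
  · intro B hB
    simp only [mem_powerset, subset_iff, mem_filter, mem_univ, true_and] at hB ⊢
    funext t
    by_cases ht : t ∈ B
    · simp [mergeChoice, ht, hB ht]
    · simp [mergeChoice, ht, hg t]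
  · intro f hf
    simp only [mem_powerset, subset_iff, mem_filter, mem_univ, true_and] at hf ⊢
    intro t ht
    simp [← hf, mergeChoice, ht]
  · intro B hB
    ext t
    by_cases ht : t ∈ B <;> simp [ht, hg t]
  · intro f hf
    simp only [mem_filter, mem_univ, true_and] at hf
    funext t
    by_cases ht : f t = some i
    · simp [ht]
    · simp [ht, ← hf, mergeChoice]

section piecewise

variable {g : Fin T → Option (Fin n)} {B : Finset (Fin T)}

lemma prod_piecewise_some (hB : B ⊆ univ.filter fun t => g t = some j)
    (q : Option (Fin n) → ℝ) :
    ∏ t, q (B.piecewise (fun _ => some i) g t) =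
      (∏ t ∈ (univ.filter fun t => g t = some j)ᶜ, q (g t)) *
        (q (some i) ^ #B * q (some j) ^ (loadCount g j - #B)) := by
  set A := univ.filter fun t => g t = some j
  have hq : ∀ t, q (B.piecewise (fun _ => some i) g t) =
      B.piecewise (fun _ => q (some i)) (q ∘ g) t :=
    fun t => by by_cases ht : t ∈ B <;> simp [ht]
  simp only [hq]
  rw [← prod_mul_prod_compl A, mul_comm, prod_piecewise A B, inter_eq_right.mpr hB, prod_const,
    loadCount, ← card_sdiff_of_subset hB, ← prod_const (q (some j))]
  congr 1
  · exact prod_congr rfl fun t ht => piecewise_eq_of_notMem _ _ _ fun h => mem_compl.mp ht (hB h)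
  · congr 1
    exact prod_congr rfl fun t ht => by simp [(mem_filter.mp (mem_sdiff.mp ht).1).2]

lemma sup_loadCount_piecewise (hij : i ≠ j) (hg : ∀ t, g t ≠ some i)
    (hB : B ⊆ univ.filter fun t => g t = some j) :
    univ.sup (loadCount (B.piecewise (fun _ => some i) g)) =
      max (({i, j}ᶜ : Finset (Fin n)).sup (loadCount g)) (max #B (loadCount g j - #B)) := by
  set f := B.piecewise (fun _ => some i) g
  have hi : loadCount f i = #B := by
    unfold loadCount; congr 1; ext t
    by_cases ht : t ∈ B <;> simp [f, ht, hg t]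
  have hj : loadCount f j = loadCount g j - #B := by
    rw [loadCount, loadCount, ← card_sdiff_of_subset hB]; congr 1; ext t
    by_cases ht : t ∈ B <;> simp [f, ht, hij]
  have hother : ∀ c ∈ ({i, j}ᶜ : Finset (Fin n)), loadCount f c = loadCount g c := by
    intro c hc
    simp only [mem_compl, mem_insert, mem_singleton, not_or] at hc
    unfold loadCount; congr 1; ext t
    by_cases ht : t ∈ B
    · simp [f, ht, (mem_filter.mp (hB ht)).2, Ne.symm hc.1, Ne.symm hc.2]
    · simp [f, ht]
  rw [← union_compl {i, j}, sup_union, sup_insert, sup_singleton, hi, hj, sup_congr rfl hother,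
    sup_comm]

end piecewise

theorem expectedMaxLoad_eq_sum_binomialSum (hij : i ≠ j) (q : Option (Fin n) → ℝ) :
    expectedMaxLoad T q = ∑ g : Fin T → Option (Fin n) with ∀ t, g t ≠ some i,
      (∏ t ∈ (univ.filter fun t => g t = some j)ᶜ, q (g t)) *
        binomialSum (loadCount g j)
          (fun l => (max (({i, j}ᶜ : Finset (Fin n)).sup (loadCount g))
            (max l (loadCount g j - l)) : ℕ)) (q (some i)) (q (some j)) := by
  rw [expectedMaxLoad, ← sum_fiberwise_of_maps_to (g := (mergeChoice i j ∘ ·))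
    (t := univ.filter fun g : Fin T → Option (Fin n) => ∀ t, g t ≠ some i)
    fun f _ => mem_filter.mpr ⟨mem_univ _, fun t => mergeChoice_ne_some hij (f t)⟩]
  refine sum_congr rfl fun g hg => ?_
  have hg : ∀ t, g t ≠ some i := (mem_filter.mp hg).2
  set M := ({i, j}ᶜ : Finset (Fin n)).sup (loadCount g)
  set m := loadCount g j
  have hsummand : ∀ B ∈ (univ.filter fun t => g t = some j).powerset,
      (∏ t, q (B.piecewise (fun _ => some i) g t)) *
          ((univ.sup (loadCount (B.piecewise (fun _ => some i) g)) : ℕ) : ℝ) =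
        (∏ t ∈ (univ.filter fun t => g t = some j)ᶜ, q (g t)) *
          (q (some i) ^ #B * q (some j) ^ (m - #B) * ((max M (max #B (m - #B)) : ℕ) : ℝ)) := by
    intro B hB
    rw [prod_piecewise_some (mem_powerset.mp hB),
      sup_loadCount_piecewise hij hg (mem_powerset.mp hB), mul_assoc]
  rw [sum_mergeChoice_fiber_eq_sum_powerset hg, sum_congr rfl hsummand, ← mul_sum,
    sum_powerset_apply_card
      (fun l => q (some i) ^ l * q (some j) ^ (m - l) * ((max M (max l (m - l)) : ℕ) : ℝ)),
    binomialSum]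
  exact congrArg _ (sum_congr rfl fun l _ => by
    rw [nsmul_eq_mul]; change (m.choose l : ℝ) * _ = _; ring)

theorem expectedMaxLoad_le_of_transfer (hij : i ≠ j) {q q' : Option (Fin n) → ℝ} {d : ℝ}
    (hq : ∀ c, 0 ≤ q c) (hji : q (some j) ≤ q (some i)) (hd : 0 ≤ d) (hdj : d ≤ q (some j))
    (hi : q' (some i) = q (some i) + d) (hj : q' (some j) = q (some j) - d)
    (hother : ∀ c, c ≠ some i → c ≠ some j → q' c = q c) :
    expectedMaxLoad T q ≤ expectedMaxLoad T q' := by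
  rw [expectedMaxLoad_eq_sum_binomialSum hij, expectedMaxLoad_eq_sum_binomialSum hij, hi, hj]
  refine sum_le_sum fun g hg => ?_
  have hg : ∀ t, g t ≠ some i := (mem_filter.mp hg).2
  have hprod : ∏ t ∈ (univ.filter fun t => g t = some j)ᶜ, q' (g t) =
      ∏ t ∈ (univ.filter fun t => g t = some j)ᶜ, q (g t) :=
    prod_congr rfl fun t ht => hother _ (hg t) (by simpa using ht)
  rw [hprod]
  exact mul_le_mul_of_nonneg_left
    (binomialSum_le_binomialSum_add_sub (fun l hl => by congr 2; omega)
      (fun l hl _ => by exact_mod_cast (by omega)) hji hd hdj)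
    (prod_nonneg fun t _ => hq _)

lemma mnlProb_nonneg {w : Fin n → ℝ} (hw : ∀ i, 0 ≤ w i) (c : Option (Fin n)) :
    0 ≤ mnlProb w c := by
  have : 0 ≤ 1 + ∑ i, w i := add_nonneg zero_le_one (sum_nonneg fun i _ => hw i)
  cases c with
  | none => exact div_nonneg zero_le_one this
  | some i => exact div_nonneg (hw i) this

end choices

/-- Transferring weight `δ` from a lighter product (index `1`) to a heavier product
(index `0`) cannot decrease the expected maximum load. -/
theorem transfer_does_not_decrease_expected_max_load
    (T k : ℕ) (w : Fin (k + 2) → ℝ) (hw : ∀ i, 0 < w i) (h12 : w 1 ≤ w 0)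
    (δ : ℝ) (hδ0 : 0 ≤ δ) (hδ1 : δ ≤ w 1) :
    ET T (k + 2) (fun i => if i = 0 then w 0 + δ else if i = 1 then w 1 - δ else w i) ≥
      ET T (k + 2) w := by
  set w' : Fin (k + 2) → ℝ := fun i => if i = 0 then w 0 + δ else if i = 1 then w 1 - δ else w i
  have hsum : ∑ i, w' i = ∑ i, w i := by
    simp only [Fin.sum_univ_succ, ↓reduceIte, Fin.succ_ne_zero, Fin.succ_zero_eq_one,
      Fin.succ_succ_ne_one, w']
    ring
  change expectedMaxLoad T (mnlProb w) ≤ expectedMaxLoad T (mnlProb w')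
  set S := 1 + ∑ i, w i
  have hS : 0 < S := add_pos_of_pos_of_nonneg one_pos (sum_nonneg fun i _ => (hw i).le)
  refine expectedMaxLoad_le_of_transfer (i := 0) (j := 1) (d := δ / S) (by simp)
    (mnlProb_nonneg fun i => (hw i).le) (div_le_div_of_nonneg_right h12 hS.le)
    (div_nonneg hδ0 hS.le) (div_le_div_of_nonneg_right hδ1 hS.le) ?_ ?_ ?_
  · simp [mnlProb, hsum, w', S, add_div]
  · simp [mnlProb, hsum, w', S, sub_div]
  · rintro (_ | c) h0 h1
    · simp [mnlProb, hsum]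
    · simp_all [mnlProb, w']
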